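/- arXiv:1910.12220 — 6 statements merged into one kernel-verified Lean document; each statement's English description precedes it below -/
import Mathlib

section
/- Let A' = {z ∈ ℂ : 1/2 ≤ |z| ≤ √(9/10)} and let ε = 1/1000. Let φ : [0,1] → A' be a path and let g : ℂ → ℂ be a map with sup_{x} |g(x) − x| < ε such that g∘φ maps into A'. Let ω_φ and ω_{gφ} be the continuous argument lifts of φ and g∘φ with ω_φ(0), ω_{gφ}(0) ∈ [0,1). Then |ω_{gφ}(t) − ω_φ(t)| < 3/2 for all t ∈ [0,1]; in particular |w(φ) − w(g∘φ)| < 3. -/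
/-!
The difference `ω' - ω` of the two lifts is continuous and starts in `(-1, 1)`. It can never
reach a half-integer: that would make `g (φ t)` and `φ t` point in opposite directions, so
`‖g (φ t) - φ t‖ = ‖g (φ t)‖ + ‖φ t‖ ≥ 1`, although `g` moves points by less than `1/1000`.
By the intermediate value theorem it therefore stays in `(-3/2, 3/2)`.
-/

open Real Set

theorem IsPreconnected.mapsTo_Ioo_of_forall_ne {X α : Type*} [TopologicalSpace X]
    [LinearOrder α] [TopologicalSpace α] [OrderClosedTopology α] {s : Set X} {f : X → α}
    {a : X} {l u : α} (hs : IsPreconnected s) (hf : ContinuousOn f s) (ha : a ∈ s)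
    (hfa : f a ∈ Ioo l u) (hl : ∀ x ∈ s, f x ≠ l) (hu : ∀ x ∈ s, f x ≠ u) :
    MapsTo f s (Ioo l u) := by
  intro x hx
  by_contra hfx
  rcases not_and_or.mp hfx with hle | hge
  · obtain ⟨y, hy, hyl⟩ := hs.intermediate_value hx ha hf ⟨not_lt.mp hle, hfa.1.le⟩
    exact hl y hy hyl
  · obtain ⟨y, hy, hyu⟩ := hs.intermediate_value ha hx hf ⟨hfa.2.le, not_lt.mp hge⟩
    exact hu y hy hyu

theorem norm_sub_eq_add_of_inv_norm_smul_eq_neg {E : Type*} [NormedAddCommGroup E]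
    [NormedSpace ℝ E] {x y : E} (hx : x ≠ 0) (hy : y ≠ 0)
    (h : ‖x‖⁻¹ • x = -(‖y‖⁻¹ • y)) : ‖x - y‖ = ‖x‖ + ‖y‖ := by
  have hray : SameRay ℝ x (-y) :=
    (sameRay_iff_inv_norm_smul_eq_of_ne hx (neg_ne_zero.mpr hy)).mpr (by simpa [norm_neg])
  rw [sub_eq_add_neg, hray.norm_add, norm_neg]

theorem Complex.exp_two_pi_mul_I_eq_neg_of_sub_eq_int_add_half {a b : ℝ} {n : ℤ}
    (h : a - b = n + 1 / 2) :
    Complex.exp (2 * π * Complex.I * a) = -Complex.exp (2 * π * Complex.I * b) := by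
  have ha : (a : ℂ) = b + n + 1 / 2 := by
    rw [show a = b + n + 1 / 2 by linarith]
    push_cast
    ring
  rw [ha, show 2 * (π : ℂ) * Complex.I * (b + n + 1 / 2)
      = 2 * π * Complex.I * b + n * (2 * π * Complex.I) + π * Complex.I by ring,
    Complex.exp_add, Complex.exp_add, Complex.exp_int_mul_two_pi_mul_I, Complex.exp_pi_mul_I]
  ring

theorem Complex.div_norm_eq_inv_norm_smul (z : ℂ) : z / (‖z‖ : ℂ) = ‖z‖⁻¹ • z := by
  rw [Complex.real_smul, Complex.ofReal_inv, div_eq_inv_mul]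

theorem sub_ne_int_add_half_of_norm_sub_lt {z w : ℂ} {a b : ℝ} (hz : z ≠ 0) (hw : w ≠ 0)
    (ha : Complex.exp (2 * π * Complex.I * a) = z / (‖z‖ : ℂ))
    (hb : Complex.exp (2 * π * Complex.I * b) = w / (‖w‖ : ℂ))
    (hzw : ‖w - z‖ < ‖w‖ + ‖z‖) (n : ℤ) : b - a ≠ n + 1 / 2 := by
  intro h
  have hopp := Complex.exp_two_pi_mul_I_eq_neg_of_sub_eq_int_add_half h
  rw [ha, hb, Complex.div_norm_eq_inv_norm_smul, Complex.div_norm_eq_inv_norm_smul] at hopp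
  exact hzw.ne (norm_sub_eq_add_of_inv_norm_smul_eq_neg hw hz hopp)

theorem winding_stable_under_small_perturbation_general
    (A' : Set ℂ)
    (hA' : A' = {z : ℂ | 1/2 ≤ ‖z‖ ∧ ‖z‖ ≤ Real.sqrt (9/10)})
    (φ : ℝ → ℂ) (hφA : MapsTo φ (Icc 0 1) A')
    (g : ℂ → ℂ) (hg : ∀ x : ℂ, ‖g x - x‖ < 1/1000)
    (hgφA : MapsTo (g ∘ φ) (Icc 0 1) A')
    (ω ω' : ℝ → ℝ)
    (hωc : ContinuousOn ω (Icc 0 1)) (hω'c : ContinuousOn ω' (Icc 0 1))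
    (hω : ∀ t ∈ Icc (0:ℝ) 1,
      Complex.exp (2 * π * Complex.I * ω t) = φ t / (‖φ t‖ : ℂ))
    (hω' : ∀ t ∈ Icc (0:ℝ) 1,
      Complex.exp (2 * π * Complex.I * ω' t) = g (φ t) / (‖g (φ t)‖ : ℂ))
    (hω0 : ω 0 ∈ Ico (0:ℝ) 1) (hω'0 : ω' 0 ∈ Ico (0:ℝ) 1) :
    (∀ t ∈ Icc (0:ℝ) 1, |ω' t - ω t| < 3/2) ∧
      |(ω 1 - ω 0) - (ω' 1 - ω' 0)| < 3 := by
  have hne : ∀ t ∈ Icc (0:ℝ) 1, ∀ n : ℤ, ω' t - ω t ≠ n + 1 / 2 := by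
    intro t ht n
    have hφt : 1 / 2 ≤ ‖φ t‖ := (hA' ▸ hφA ht).1
    have hgφt : 1 / 2 ≤ ‖g (φ t)‖ := (hA' ▸ hgφA ht).1
    refine sub_ne_int_add_half_of_norm_sub_lt ?_ ?_ (hω t ht) (hω' t ht) ?_ n
    · exact norm_pos_iff.mp (by linarith)
    · exact norm_pos_iff.mp (by linarith)
    · linarith [hg (φ t)]
  have hbound : MapsTo (fun t => ω' t - ω t) (Icc 0 1) (Ioo (-(3/2)) (3/2)) :=
    isPreconnected_Icc.mapsTo_Ioo_of_forall_ne (hω'c.sub hωc) (left_mem_Icc.mpr zero_le_one)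
      ⟨by linarith [hω0.2, hω'0.1], by linarith [hω0.1, hω'0.2]⟩
      (fun t ht h => hne t ht (-2) (by rw [h]; norm_num))
      (fun t ht h => hne t ht 1 (by rw [h]; norm_num))
  refine ⟨fun t ht => abs_lt.mpr (hbound ht), ?_⟩
  have h0 := hbound (left_mem_Icc.mpr zero_le_one)
  have h1 := hbound (right_mem_Icc.mpr zero_le_one)
  simp only [mem_Ioo] at h0 h1
  rw [abs_lt]
  constructor <;> linarith

/-- Stability of winding under perturbations smaller than `ε = 1/1000`: if `φ` is a path
in the annulus `A' = {z : 1/2 ≤ |z| ≤ √(9/10)}`, `g : ℂ → ℂ` moves every point by less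
than `1/1000`, `g ∘ φ` also maps into `A'`, and `ω, ω'` are the continuous argument lifts
of `φ` and `g ∘ φ` with `ω 0, ω' 0 ∈ [0,1)`, then `|ω' t - ω t| < 3/2` for all `t`;
in particular, the winding numbers satisfy `|w(φ) - w(g∘φ)| < 3`. -/
theorem winding_stable_under_small_perturbation
    (A' : Set ℂ)
    (hA' : A' = {z : ℂ | 1/2 ≤ ‖z‖ ∧ ‖z‖ ≤ Real.sqrt (9/10)})
    (φ : ℝ → ℂ) (hφ : ContinuousOn φ (Icc 0 1)) (hφA : MapsTo φ (Icc 0 1) A')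
    (g : ℂ → ℂ) (hg : ∀ x : ℂ, ‖g x - x‖ < 1/1000)
    (hgφA : MapsTo (g ∘ φ) (Icc 0 1) A')
    (ω ω' : ℝ → ℝ)
    (hωc : ContinuousOn ω (Icc 0 1)) (hω'c : ContinuousOn ω' (Icc 0 1))
    (hω : ∀ t ∈ Icc (0:ℝ) 1,
      Complex.exp (2 * π * Complex.I * ω t) = φ t / (‖φ t‖ : ℂ))
    (hω' : ∀ t ∈ Icc (0:ℝ) 1,
      Complex.exp (2 * π * Complex.I * ω' t) = g (φ t) / (‖g (φ t)‖ : ℂ))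
    (hω0 : ω 0 ∈ Ico (0:ℝ) 1) (hω'0 : ω' 0 ∈ Ico (0:ℝ) 1) :
    (∀ t ∈ Icc (0:ℝ) 1, |ω' t - ω t| < 3/2) ∧
      |(ω 1 - ω 0) - (ω' 1 - ω' 0)| < 3 :=
  winding_stable_under_small_perturbation_general A' hA' φ hφA g hg hgφA ω ω' hωc hω'c hω hω' hω0
    hω'0
end

section
/- Define φ_N : [0,1] → ℂ in polar form by φ_N(t) = r(t)·exp(6πiNt) for t ∈ [0,1/3], φ_N(t) = r(t) for t ∈ [1/3,2/3], and φ_N(t) = r(t)·exp(−12πiNt) for t ∈ [2/3,1], where r(t) = 9/12 + t/2 and N ≥ 1 is an integer. Then φ_N is injective and its winding number around the origin is w(φ_N) = −N. -/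
open Real Set

open Complex (I)
open scoped Complex

/-!
Write `φ_N(t) = r(t) · exp(2πi θ(t))` with the explicit piecewise-linear angle `θ`
(`windingLift`), which is continuous because `exp(2πiN) = exp(-8πiN) = 1` make the three
pieces agree at `t = 1/3` and `t = 2/3`. Then `‖φ_N(t)‖ = r(t)` is strictly increasing, so
`φ_N` is injective, and any other continuous lift `ω` differs from `θ` by a continuous
integer-valued, hence constant, function on `[0,1]`; so `ω(1) - ω(0) = θ(1) - θ(0) = -N`.
-/

theorem IsPreconnected.sub_eq_sub_of_cexp_eq {α : Type*} [TopologicalSpace α] {S : Set α}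
    (hS : IsPreconnected S) {f g : α → ℝ} (hf : ContinuousOn f S) (hg : ContinuousOn g S)
    (hfg : ∀ t ∈ S, cexp (2 * π * I * f t) = cexp (2 * π * I * g t))
    {x y : α} (hx : x ∈ S) (hy : y ∈ S) : f x - g x = f y - g y := by
  have hdiscrete : IsDiscrete (AddSubgroup.zmultiples (1 : ℝ) : Set ℝ) :=
    SetLike.isDiscrete_iff_discreteTopology.mpr inferInstance
  refine hS.constant_of_mapsTo hdiscrete (hf.sub hg) (fun t ht ↦ ?_) hx hy
  obtain ⟨n, hn⟩ := Complex.exp_eq_exp_iff_exists_int.mp (hfg t ht)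
  have hn' : ((f t - g t : ℝ) : ℂ) = n := by
    apply mul_left_cancel₀ (by simp [Real.pi_ne_zero] : (2 * π * I : ℂ) ≠ 0)
    push_cast
    linear_combination hn
  rw [Pi.sub_apply, show f t - g t = n by exact_mod_cast hn']
  exact AddSubgroup.intCast_mem_zmultiples_one n

theorem norm_ofReal_mul_cexp_two_pi_I {r : ℝ} (hr : 0 ≤ r) (θ : ℝ) :
    ‖(r : ℂ) * cexp (2 * π * I * θ)‖ = r := by
  rw [norm_mul, Complex.norm_real, Real.norm_of_nonneg hr,
    show 2 * π * I * θ = ((2 * π * θ : ℝ) : ℂ) * I by push_cast; ring,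
    Complex.norm_exp_ofReal_mul_I, mul_one]

theorem ofReal_mul_cexp_two_pi_I_div_norm {r : ℝ} (hr : 0 < r) (θ : ℝ) :
    (r : ℂ) * cexp (2 * π * I * θ) / (‖(r : ℂ) * cexp (2 * π * I * θ)‖ : ℂ) =
      cexp (2 * π * I * θ) := by
  rw [norm_ofReal_mul_cexp_two_pi_I hr.le, mul_div_cancel_left₀ _ (by exact_mod_cast hr.ne')]

noncomputable def phiN (N : ℕ) (t : ℝ) : ℂ :=
  if t ≤ 1/3 then ((9/12 + t/2 : ℝ) : ℂ) * Complex.exp (6 * π * N * t * Complex.I)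
  else if t ≤ 2/3 then ((9/12 + t/2 : ℝ) : ℂ)
  else ((9/12 + t/2 : ℝ) : ℂ) * Complex.exp (-(12 * π * N * t) * Complex.I)

noncomputable def windingLift (N : ℕ) (t : ℝ) : ℝ :=
  if t ≤ 1/3 then 3 * N * t else if t ≤ 2/3 then N else 5 * N - 6 * N * t

theorem continuous_windingLift (N : ℕ) : Continuous (windingLift N) := by
  refine Continuous.if_le (by fun_prop) (Continuous.if_le ?_ ?_ ?_ ?_ ?_) ?_ ?_ ?_ <;>
    try fun_prop
  · rintro t rfl
    ring
  · rintro t rfl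
    rw [if_pos (by norm_num)]
    ring

theorem windingLift_zero (N : ℕ) : windingLift N 0 = 0 := by
  simp [windingLift]

theorem windingLift_one (N : ℕ) : windingLift N 1 = -N := by
  rw [windingLift, if_neg (by norm_num), if_neg (by norm_num)]
  ring

theorem phiN_eq_ofReal_mul_cexp (N : ℕ) (t : ℝ) :
    phiN N t = ((9/12 + t/2 : ℝ) : ℂ) * cexp (2 * π * I * windingLift N t) := by
  unfold phiN windingLift
  split_ifs
  · congr 2
    push_cast
    ring
  · rw [show 2 * π * I * ((N : ℝ) : ℂ) = (N : ℤ) * (2 * π * I) by push_cast; ring,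
      Complex.exp_int_mul_two_pi_mul_I, mul_one]
  · rw [show 2 * π * I * ((5 * N - 6 * N * t : ℝ) : ℂ) =
        -(12 * π * N * t) * I + (5 * N : ℤ) * (2 * π * I) by push_cast; ring,
      Complex.exp_add, Complex.exp_int_mul_two_pi_mul_I, mul_one]

theorem phiN_injective_and_winding_general
    (N : ℕ) (φ : ℝ → ℂ)
    (hφ : ∀ t : ℝ, φ t =
      if t ≤ 1/3 then ((9/12 + t/2 : ℝ) : ℂ) * Complex.exp (6 * π * N * t * Complex.I)
      else if t ≤ 2/3 then ((9/12 + t/2 : ℝ) : ℂ)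
      else ((9/12 + t/2 : ℝ) : ℂ) * Complex.exp (-(12 * π * N * t) * Complex.I)) :
    InjOn φ (Icc 0 1) ∧
      ∀ ω : ℝ → ℝ, ContinuousOn ω (Icc 0 1) →
        (∀ t ∈ Icc (0:ℝ) 1,
          Complex.exp (2 * π * Complex.I * ω t) = φ t / (‖φ t‖ : ℂ)) →
        ω 1 - ω 0 = -N := by
  have hpolar (t : ℝ) : φ t = ((9/12 + t/2 : ℝ) : ℂ) * cexp (2 * π * I * windingLift N t) :=
    (hφ t).trans (phiN_eq_ofReal_mul_cexp N t)
  have hradius {t : ℝ} (ht : t ∈ Icc (0:ℝ) 1) : 0 < 9/12 + t/2 := by linarith [ht.1]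
  refine ⟨?_, fun ω hω hlift ↦ ?_⟩
  · have hnorm : EqOn (fun t : ℝ ↦ 9/12 + t/2) (fun t ↦ ‖φ t‖) (Icc 0 1) := fun t ht ↦ by
      simp only [hpolar, norm_ofReal_mul_cexp_two_pi_I (hradius ht).le]
    have hr : StrictMono fun t : ℝ ↦ 9/12 + t/2 := fun s t hst ↦ by dsimp only; linarith
    exact (hr.injective.injOn.congr hnorm).of_comp
  · have hsame : ∀ t ∈ Icc (0:ℝ) 1,
        cexp (2 * π * I * ω t) = cexp (2 * π * I * windingLift N t) := fun t ht ↦ by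
      rw [hlift t ht, hpolar, ofReal_mul_cexp_two_pi_I_div_norm (hradius ht)]
    have := isPreconnected_Icc.sub_eq_sub_of_cexp_eq hω (continuous_windingLift N).continuousOn
      hsame (left_mem_Icc.mpr zero_le_one) (right_mem_Icc.mpr zero_le_one)
    rw [windingLift_zero, windingLift_one] at this
    linarith

/-- The arc `φ_N(t)` with radius `r(t) = 9/12 + t/2`, which winds counterclockwise `N`
times on `[0,1/3]`, stays at constant argument on `[1/3,2/3]`, and winds clockwise `2N`
times on `[2/3,1]`, is injective and has winding number `-N` around the origin. -/
theorem phiN_injective_and_winding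
    (N : ℕ) (hN : 1 ≤ N) (φ : ℝ → ℂ)
    (hφ : ∀ t : ℝ, φ t =
      if t ≤ 1/3 then ((9/12 + t/2 : ℝ) : ℂ) * Complex.exp (6 * π * N * t * Complex.I)
      else if t ≤ 2/3 then ((9/12 + t/2 : ℝ) : ℂ)
      else ((9/12 + t/2 : ℝ) : ℂ) * Complex.exp (-(12 * π * N * t) * Complex.I)) :
    InjOn φ (Icc 0 1) ∧
      ∀ ω : ℝ → ℝ, ContinuousOn ω (Icc 0 1) →
        (∀ t ∈ Icc (0:ℝ) 1,
          Complex.exp (2 * π * Complex.I * ω t) = φ t / (‖φ t‖ : ℂ)) →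
        ω 1 - ω 0 = -N :=
  phiN_injective_and_winding_general N φ hφ
end

section
/- Let Y be a compact Hausdorff space and denote by V(Y) its hyperspace of nonempty closed subsets with the Vietoris topology. If c ⊆ V(Y) is a closed subset that is a chain (linearly ordered by inclusion) and maximal among such chains, then the intersection of all members of c is a singleton {x} and {x} ∈ c, and Y ∈ c. -/
/-- In a nonempty compact Hausdorff space `Y`, a maximal chain `c` of nonempty closed
subsets of `Y` contains `Y`, its total intersection is a singleton `{x}`, and `{x} ∈ c`. -/
theorem maximal_chain_of_closed_sets
    (Y : Type*) [TopologicalSpace Y] [CompactSpace Y] [T2Space Y] [Nonempty Y]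
    (c : Set (Set Y))
    (hclosed : ∀ A ∈ c, IsClosed A ∧ A.Nonempty)
    (hchain : IsChain (· ⊆ ·) c)
    (hmax : ∀ K : Set Y, IsClosed K → K.Nonempty →
      (∀ A ∈ c, K ⊆ A ∨ A ⊆ K) → K ∈ c) :
    (∃ x : Y, ⋂₀ c = {x} ∧ {x} ∈ c) ∧ Set.univ ∈ c := by
  have huniv : Set.univ ∈ c :=
    hmax Set.univ isClosed_univ Set.univ_nonempty
      (fun A _ => Or.inr (Set.subset_univ A))
  have hcne : c.Nonempty := ⟨Set.univ, huniv⟩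
  -- the intersection is nonempty by compactness
  haveI : Nonempty c := hcne.to_subtype
  have hdir : Directed (· ⊇ ·) (fun A : c => (A : Set Y)) := by
    intro A B
    rcases hchain.total A.2 B.2 with h | h
    · exact ⟨A, Set.Subset.rfl, h⟩
    · exact ⟨B, h, Set.Subset.rfl⟩
  have hKne : (⋂₀ c).Nonempty := by
    rw [Set.sInter_eq_iInter]
    exact IsCompact.nonempty_iInter_of_directed_nonempty_isCompact_isClosed _ hdir
      (fun A => (hclosed A A.2).2)
      (fun A => (hclosed A A.2).1.isCompact)
      (fun A => (hclosed A A.2).1)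
  obtain ⟨x, hx⟩ := hKne
  have hxmem : {x} ∈ c := by
    refine hmax {x} isClosed_singleton (Set.singleton_nonempty x) (fun A hA => ?_)
    exact Or.inl (Set.singleton_subset_iff.mpr (hx A hA))
  refine ⟨⟨x, ?_, hxmem⟩, huniv⟩
  exact Set.Subset.antisymm (Set.sInter_subset_of_mem hxmem)
    (Set.singleton_subset_iff.mpr hx)
end

section
/- Let Y be a compact Hausdorff space and c a maximal chain of closed subsets of Y (a closed subset of the hyperspace V(Y), linearly ordered by inclusion and maximal as such). If c is connected as a subspace of V(Y), then every member of c is a connected subset of Y. -/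
open TopologicalSpace Metric Set

/-- Let `Y` be a compact metric space and `c` a maximal chain of nonempty closed subsets
of `Y`, viewed as a subset of the hyperspace of nonempty compact subsets of `Y` (with the
Hausdorff metric topology, which coincides with the Vietoris topology). If `c` is
connected as a subspace of the hyperspace, then every member of `c` is connected. -/
theorem connected_maximal_chain_members_connected
    (Y : Type*) [MetricSpace Y] [CompactSpace Y] [Nonempty Y]
    (c : Set (NonemptyCompacts Y))
    (hchain : IsChain (fun A B : NonemptyCompacts Y => (A : Set Y) ⊆ (B : Set Y)) c)
    (hmax : ∀ K : NonemptyCompacts Y,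
      (∀ A ∈ c, (K : Set Y) ⊆ (A : Set Y) ∨ (A : Set Y) ⊆ (K : Set Y)) → K ∈ c)
    (hconn : IsConnected c) :
    ∀ A ∈ c, IsConnected (A : Set Y) := by
  intro A hA
  refine ⟨A.nonempty, ?_⟩
  by_contra hnc
  rw [isPreconnected_closed_iff] at hnc
  push_neg at hnc
  obtain ⟨t, t', ht, ht', hcover, hntP, hntQ, hdisj⟩ := hnc
  set P : Set Y := (A : Set Y) ∩ t with hPdef
  set Q : Set Y := (A : Set Y) ∩ t' with hQdef
  have hPc : IsClosed P := A.isCompact.isClosed.inter ht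
  have hQc : IsClosed Q := A.isCompact.isClosed.inter ht'
  have hPQdisj : P ∩ Q = ∅ := by
    rw [← Set.subset_empty_iff, ← hdisj]
    exact fun x hx => ⟨hx.1.1, hx.1.2, hx.2.2⟩
  have hPQcover : ∀ x ∈ (A : Set Y), x ∈ P ∨ x ∈ Q := by
    intro x hx
    rcases hcover hx with h | h
    · exact Or.inl ⟨hx, h⟩
    · exact Or.inr ⟨hx, h⟩
  -- totality of the chain order
  have htot : ∀ B₁ ∈ c, ∀ B₂ ∈ c, (B₁ : Set Y) ⊆ (B₂ : Set Y) ∨ (B₂ : Set Y) ⊆ (B₁ : Set Y) := by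
    intro B₁ h₁ B₂ h₂
    rcases eq_or_ne B₁ B₂ with rfl | hne
    · exact Or.inl subset_rfl
    · exact hchain h₁ h₂ hne
  -- the members of c meeting both P and Q
  set T : Set (NonemptyCompacts Y) :=
    {B | B ∈ c ∧ ((B : Set Y) ∩ P).Nonempty ∧ ((B : Set Y) ∩ Q).Nonempty} with hTdef
  have hAT : A ∈ T := by
    refine ⟨hA, ?_, ?_⟩
    · obtain ⟨p, hp⟩ := hntP; exact ⟨p, hp.1, hp⟩
    · obtain ⟨q, hq⟩ := hntQ; exact ⟨q, hq.1, hq⟩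
  -- every member of c not in T is below every member of T
  have hLT : ∀ B ∈ c, B ∉ T → ∀ C ∈ T, (B : Set Y) ⊆ (C : Set Y) := by
    intro B hBc hBnT C hCT
    rcases htot B hBc C hCT.1 with h | h
    · exact h
    · exact absurd ⟨hBc, hCT.2.1.mono (Set.inter_subset_inter_left P h),
        hCT.2.2.mono (Set.inter_subset_inter_left Q h)⟩ hBnT
  -- the intersection of T
  set K0s : Set Y := ⋂ B ∈ T, (B : Set Y) with hK0def
  have hK0closed : IsClosed K0s := isClosed_biInter fun B _ => B.isCompact.isClosed
  have hK0cpt : IsCompact K0s := hK0closed.isCompact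
  have hneT : Nonempty ↥T := ⟨⟨A, hAT⟩⟩
  have hinter : ∀ R : Set Y, IsClosed R → (∀ B ∈ T, ((B : Set Y) ∩ R).Nonempty) →
      (K0s ∩ R).Nonempty := by
    intro R hRc hne
    have hdir : Directed (· ⊇ ·) (fun B : ↥T => ((B : NonemptyCompacts Y) : Set Y) ∩ R) := by
      intro B₁ B₂
      rcases htot B₁.1 B₁.2.1 B₂.1 B₂.2.1 with h | h
      · exact ⟨B₁, subset_rfl, Set.inter_subset_inter_left R h⟩
      · exact ⟨B₂, Set.inter_subset_inter_left R h, subset_rfl⟩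
    obtain ⟨x, hx⟩ := IsCompact.nonempty_iInter_of_directed_nonempty_isCompact_isClosed
      (fun B : ↥T => ((B : NonemptyCompacts Y) : Set Y) ∩ R) hdir
      (fun B => hne B.1 B.2)
      (fun B => B.1.isCompact.inter_right hRc)
      (fun B => B.1.isCompact.isClosed.inter hRc)
    simp only [Set.mem_iInter] at hx
    refine ⟨x, ?_, (hx ⟨A, hAT⟩).2⟩
    exact Set.mem_iInter₂.2 fun B hB => (hx ⟨B, hB⟩).1
  have hK0P : (K0s ∩ P).Nonempty := hinter P hPc fun B hB => hB.2.1
  have hK0Q : (K0s ∩ Q).Nonempty := hinter Q hQc fun B hB => hB.2.2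
  have hK0ne : K0s.Nonempty := ⟨hK0P.choose, hK0P.choose_spec.1⟩
  set K0 : NonemptyCompacts Y := ⟨⟨K0s, hK0cpt⟩, hK0ne⟩ with hK0'
  have hK0min : ∀ C ∈ T, K0s ⊆ (C : Set Y) := fun C hC => Set.biInter_subset_of_mem hC
  have hK0c : K0 ∈ c := by
    apply hmax
    intro C hC
    by_cases hCT : C ∈ T
    · exact Or.inl (hK0min C hCT)
    · exact Or.inr (Set.subset_iInter₂ fun B hB => hLT C hC hCT B hB)
  have hK0T : K0 ∈ T := ⟨hK0c, hK0P, hK0Q⟩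
  have hK0subA : K0s ⊆ (A : Set Y) := Set.biInter_subset_of_mem hAT
  -- the members of c not in T
  set L : Set (NonemptyCompacts Y) := {B | B ∈ c ∧ B ∉ T} with hLdef
  have hLsub : ∀ B ∈ L, (B : Set Y) ⊆ K0s := fun B hB => hLT B hB.1 hB.2 K0 hK0T
  have hLne : L.Nonempty := by
    by_contra h
    rw [Set.not_nonempty_iff_eq_empty] at h
    have hcT : ∀ B ∈ c, B ∈ T := by
      intro B hB
      by_contra hBT
      exact absurd (h ▸ (⟨hB, hBT⟩ : B ∈ L)) (Set.notMem_empty B)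
    obtain ⟨x, hxK, hxP⟩ := hK0P
    set S : NonemptyCompacts Y := ⟨⟨{x}, isCompact_singleton⟩, Set.singleton_nonempty x⟩ with hS
    have hSc : S ∈ c := by
      apply hmax
      intro C hC
      exact Or.inl (Set.singleton_subset_iff.2 (hK0min C (hcT C hC) hxK))
    obtain ⟨y, hy1, hy2⟩ := (hcT S hSc).2.2
    have : y = x := hy1
    rw [this] at hy2
    have : x ∈ P ∩ Q := ⟨hxP, hy2⟩
    rw [hPQdisj] at this
    exact this
  -- all members of L avoid the same side
  have huni : (∀ B ∈ L, ((B : Set Y) ∩ P) = ∅) ∨ (∀ B ∈ L, ((B : Set Y) ∩ Q) = ∅) := by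
    by_contra h
    push_neg at h
    obtain ⟨⟨B₁, hB₁L, hB₁P⟩, B₂, hB₂L, hB₂Q⟩ := h
    have hB₁Q : ((B₁ : Set Y) ∩ Q) = ∅ := by
      by_contra hq
      exact hB₁L.2 ⟨hB₁L.1, hB₁P, Set.nonempty_iff_ne_empty.2 hq⟩
    have hB₂P : ((B₂ : Set Y) ∩ P) = ∅ := by
      by_contra hp
      exact hB₂L.2 ⟨hB₂L.1, Set.nonempty_iff_ne_empty.2 hp, hB₂Q⟩
    rcases htot B₁ hB₁L.1 B₂ hB₂L.1 with h | h
    · have : ((B₁ : Set Y) ∩ P) ⊆ ((B₂ : Set Y) ∩ P) := Set.inter_subset_inter_left P h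
      rw [hB₂P] at this
      exact absurd (Set.subset_empty_iff.1 this) hB₁P.ne_empty
    · have : ((B₂ : Set Y) ∩ Q) ⊆ ((B₁ : Set Y) ∩ Q) := Set.inter_subset_inter_left Q h
      rw [hB₁Q] at this
      exact absurd (Set.subset_empty_iff.1 this) hB₂Q.ne_empty
  -- the main contradiction, stated symmetrically in the two sides
  have final : ∀ R S : Set Y, IsClosed S → R ∩ S = ∅ → (K0s ∩ R).Nonempty →
      (∀ x ∈ (A : Set Y), x ∈ R ∨ x ∈ S) → (∀ B ∈ L, ((B : Set Y) ∩ R) = ∅) → False := by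
    intro R S hScl hRS hKR hKcov hLR
    set Ms : Set Y := closure (⋃ B ∈ L, (B : Set Y)) with hMdef
    have hMcl : IsClosed Ms := isClosed_closure
    have hMcpt : IsCompact Ms := hMcl.isCompact
    have hMne : Ms.Nonempty := by
      obtain ⟨B, hB⟩ := hLne
      obtain ⟨x, hx⟩ := B.nonempty
      exact ⟨x, subset_closure (Set.mem_biUnion hB hx)⟩
    have hMS : Ms ⊆ S := by
      apply closure_minimal _ hScl
      intro x hx
      obtain ⟨B, hB, hxB⟩ := Set.mem_iUnion₂.1 hx
      rcases hKcov x (hK0subA (hLsub B hB hxB)) with hR | hS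
      · exact absurd (hLR B hB ▸ (⟨hxB, hR⟩ : x ∈ (B : Set Y) ∩ R)) (Set.notMem_empty x)
      · exact hS
    set M : NonemptyCompacts Y := ⟨⟨Ms, hMcpt⟩, hMne⟩ with hM
    have hMc : M ∈ c := by
      apply hmax
      intro C hC
      by_cases hCT : C ∈ T
      · exact Or.inl (closure_minimal (Set.iUnion₂_subset fun B hB => hLT B hB.1 hB.2 C hCT)
          C.isCompact.isClosed)
      · exact Or.inr (fun x hx => subset_closure (Set.mem_biUnion (⟨hC, hCT⟩ : C ∈ L) hx))
    obtain ⟨q, hqK, hqR⟩ := hKR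
    have hqM : q ∉ Ms := by
      intro h
      have : q ∈ R ∩ S := ⟨hqR, hMS h⟩
      rw [hRS] at this
      exact this
    have hε : 0 < infDist q Ms := (hMcl.notMem_iff_infDist_pos hMne).1 hqM
    have hf : Continuous (fun C : NonemptyCompacts Y => infDist q (C : Set Y)) :=
      (Metric.lipschitz_infDist_set q).continuous
    have himg : IsPreconnected ((fun C : NonemptyCompacts Y => infDist q (C : Set Y)) '' c) :=
      (hconn.image _ hf.continuousOn).isPreconnected
    have h0 : (0 : ℝ) ∈ (fun C : NonemptyCompacts Y => infDist q (C : Set Y)) '' c :=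
      ⟨K0, hK0c, infDist_zero_of_mem hqK⟩
    have hεmem : infDist q Ms ∈ (fun C : NonemptyCompacts Y => infDist q (C : Set Y)) '' c :=
      ⟨M, hMc, rfl⟩
    have hIcc := himg.ordConnected.out h0 hεmem
    have hmid : infDist q Ms / 2 ∈ Set.Icc (0 : ℝ) (infDist q Ms) :=
      ⟨by linarith, by linarith⟩
    obtain ⟨C, hCc, hCval'⟩ := hIcc hmid
    have hCval : infDist q (C : Set Y) = infDist q Ms / 2 := hCval'
    by_cases hCT : C ∈ T
    · have hqC : q ∈ (C : Set Y) := hK0min C hCT hqK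
      have : infDist q (C : Set Y) = 0 := infDist_zero_of_mem hqC
      rw [this] at hCval
      linarith
    · have hsub : (C : Set Y) ⊆ Ms :=
        fun x hx => subset_closure (Set.mem_biUnion (⟨hCc, hCT⟩ : C ∈ L) hx)
      have : infDist q Ms ≤ infDist q (C : Set Y) :=
        infDist_le_infDist_of_subset hsub C.nonempty
      rw [hCval] at this
      linarith
  rcases huni with h | h
  · exact final P Q hQc hPQdisj hK0P (fun x hx => hPQcover x hx) h
  · exact final Q P hPc (by rw [Set.inter_comm]; exact hPQdisj) hK0Q
      (fun x hx => (hPQcover x hx).symm) h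
end

section
/- Let Q = [0,1]^ℕ be the Hilbert cube. A closed set A ⊆ Q is a Z-set if for every ε > 0 there is a continuous f : Q → Q \ A with d(f(x), x) < ε for all x. Then the collection of Z-sets is a G_δ subset of the hyperspace V(Q) of nonempty closed subsets of Q with the Vietoris topology. -/
open TopologicalSpace

open Metric in
theorem zsets_open_aux {Q : Type*} [MetricSpace Q] [CompactSpace Q] (ε : ℝ) :
    IsOpen {A : NonemptyCompacts Q | ∃ f : Q → Q,
      Continuous f ∧ (∀ x : Q, f x ∉ (A : Set Q)) ∧ ∀ x : Q, dist (f x) x < ε} := by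
  rw [Metric.isOpen_iff]
  rintro A ⟨f, hf, hfa, hfe⟩
  have : Nonempty Q := ⟨A.nonempty.choose⟩
  have hK : IsCompact (Set.range f) := isCompact_range hf
  obtain ⟨x₀, hx₀mem, hx₀⟩ := hK.exists_isMinOn (Set.range_nonempty f)
    (continuous_infDist_pt (A : Set Q)).continuousOn
  set δ := infDist x₀ (A : Set Q) with hδ
  have hclosed : IsClosed (A : Set Q) := A.isCompact.isClosed
  have hpos : 0 < δ := by
    rcases (infDist_nonneg : 0 ≤ δ).lt_or_eq with h | h
    · exact h
    · exfalso
      have : x₀ ∈ (A : Set Q) :=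
        (hclosed.mem_iff_infDist_zero A.nonempty).2 h.symm
      obtain ⟨y, hy⟩ := hx₀mem
      exact hfa y (hy ▸ this)
  refine ⟨δ, hpos, fun A' hA' => ⟨f, hf, fun x hx => ?_, hfe⟩⟩
  have hfin : EMetric.hausdorffEdist (A' : Set Q) (A : Set Q) ≠ ⊤ :=
    hausdorffEdist_ne_top_of_nonempty_of_bounded A'.nonempty A.nonempty
      A'.isCompact.isBounded A.isCompact.isBounded
  have h1 : infDist (f x) (A : Set Q) ≤
      infDist (f x) (A' : Set Q) + hausdorffDist (A' : Set Q) (A : Set Q) :=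
    infDist_le_infDist_add_hausdorffDist hfin
  have h2 : infDist (f x) (A' : Set Q) = 0 := infDist_zero_of_mem hx
  have h3 : δ ≤ infDist (f x) (A : Set Q) := hx₀ (Set.mem_range_self x)
  have h4 : hausdorffDist (A' : Set Q) (A : Set Q) < δ := by
    rw [mem_ball, NonemptyCompacts.dist_eq] at hA'
    exact hA'
  linarith

/-- In the Hilbert cube `Q` (a compact metric space homeomorphic to `[0,1]^ℕ`), the
collection of Z-sets — nonempty closed sets `A` such that for every `ε > 0` there is a
continuous `f : Q → Q \ A` moving each point by less than `ε` — is a `G_δ` subset of the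
hyperspace of nonempty closed (= compact) subsets of `Q` with the Vietoris (= Hausdorff
metric) topology. -/
theorem zsets_Gdelta_in_hyperspace
    (Q : Type*) [MetricSpace Q] [CompactSpace Q]
    (e : Q ≃ₜ (ℕ → Set.Icc (0:ℝ) 1)) :
    IsGδ {A : NonemptyCompacts Q | ∀ ε > (0:ℝ), ∃ f : Q → Q,
      Continuous f ∧ (∀ x : Q, f x ∉ (A : Set Q)) ∧ ∀ x : Q, dist (f x) x < ε} := by
  have : {A : NonemptyCompacts Q | ∀ ε > (0:ℝ), ∃ f : Q → Q,
      Continuous f ∧ (∀ x : Q, f x ∉ (A : Set Q)) ∧ ∀ x : Q, dist (f x) x < ε}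
      = ⋂ n : ℕ, {A : NonemptyCompacts Q | ∃ f : Q → Q,
      Continuous f ∧ (∀ x : Q, f x ∉ (A : Set Q)) ∧ ∀ x : Q, dist (f x) x < 1/(n+1)} := by
    ext A
    simp only [Set.mem_setOf_eq, Set.mem_iInter]
    constructor
    · intro h n
      exact h (1/(n+1)) (by positivity)
    · intro h ε hε
      obtain ⟨n, hn⟩ := exists_nat_one_div_lt hε
      obtain ⟨f, hf, hfa, hfe⟩ := h n
      exact ⟨f, hf, hfa, fun x => (hfe x).trans hn⟩
  rw [this]
  exact .iInter fun n => (zsets_open_aux _).isGδ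
end

section
/- Let P be a hereditarily indecomposable continuum. Then the map P → C(P), x ↦ c_x := {K subcontinuum of P : x ∈ K}, is a bijection between P and the set of maximal connected chains of closed subsets of P, with inverse sending a maximal connected chain to its smallest element. -/
open Set

private lemma exists_clopen_subset_aux {Y : Type*} [TopologicalSpace Y] [T2Space Y]
    [CompactSpace Y] {x : Y} {W : Set Y} (hW : IsOpen W) (h : connectedComponent x ⊆ W) :
    ∃ Z : Set Y, IsClopen Z ∧ x ∈ Z ∧ Z ⊆ W := by
  let N := { s : Set Y // IsClopen s ∧ x ∈ s }
  haveI : Nonempty N := ⟨⟨univ, isClopen_univ, mem_univ x⟩⟩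
  have hdir : Directed (· ⊇ ·) fun s : N => s.val := by
    rintro ⟨s, hs, hxs⟩ ⟨t, ht, hxt⟩
    exact ⟨⟨s ∩ t, hs.inter ht, ⟨hxs, hxt⟩⟩, inter_subset_left, inter_subset_right⟩
  have hNcl : ∀ s : N, IsClosed s.val := fun s => s.2.1.1
  have h_nhd : ∀ y ∈ ⋂ s : N, s.val, W ∈ nhds y := by
    intro y hy
    rw [← connectedComponent_eq_iInter_isClopen] at hy
    exact hW.mem_nhds (h hy)
  obtain ⟨⟨Z, hZ, hxZ⟩, hZW⟩ := exists_subset_nhds_of_compactSpace hdir hNcl h_nhd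
  exact ⟨Z, hZ, hxZ, hZW⟩

/-- Boundary bumping: in a compact connected T2 space, the connected component of `x` in the
closure of a proper open set `U` containing `x` meets `closure U \ U`. -/
private lemma bump_aux {P : Type*} [TopologicalSpace P] [T2Space P] [CompactSpace P]
    [ConnectedSpace P] {U : Set P} (hU : IsOpen U) {x : P} (hx : x ∈ U) (hne : U ≠ univ) :
    (connectedComponentIn (closure U) x ∩ (closure U \ U)).Nonempty := by
  by_contra hcon
  rw [not_nonempty_iff_eq_empty] at hcon
  have hxc : x ∈ closure U := subset_closure hx
  haveI : CompactSpace (closure U) := isCompact_iff_compactSpace.mp isClosed_closure.isCompact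
  set x' : closure U := ⟨x, hxc⟩ with hx'
  have hsub : connectedComponent x' ⊆ (Subtype.val ⁻¹' U : Set (closure U)) := by
    intro p hp
    have hmem : (p : P) ∈ connectedComponentIn (closure U) x := by
      rw [connectedComponentIn_eq_image hxc]
      exact ⟨p, hp, rfl⟩
    by_contra hpu
    exact absurd hcon (Nonempty.ne_empty ⟨p, hmem, p.2, hpu⟩)
  obtain ⟨Z, hZ, hxZ, hZW⟩ :=
    exists_clopen_subset_aux (hU.preimage continuous_subtype_val) hsub
  set Z' : Set P := Subtype.val '' Z with hZ'def
  have hZ'U : Z' ⊆ U := by rintro _ ⟨p, hp, rfl⟩; exact hZW hp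
  have hZ'cl : IsClosed Z' := (hZ.1.isCompact.image continuous_subtype_val).isClosed
  have hZ'op : IsOpen Z' := by
    obtain ⟨V, hV, hVeq⟩ := isOpen_induced_iff.mp hZ.2
    have heq : Z' = V ∩ U := by
      apply Subset.antisymm
      · rintro _ ⟨p, hp, rfl⟩
        refine ⟨?_, hZW hp⟩
        rw [← hVeq] at hp; exact hp
      · rintro q ⟨hqV, hqU⟩
        refine ⟨⟨q, subset_closure hqU⟩, ?_, rfl⟩
        rw [← hVeq]; exact hqV
    rw [heq]; exact hV.inter hU
  have hZ'clopen : IsClopen Z' := ⟨hZ'cl, hZ'op⟩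
  have huniv : Z' = univ := hZ'clopen.eq_univ ⟨x, ⟨x', hxZ, rfl⟩⟩
  exact hne (eq_univ_of_univ_subset (huniv ▸ hZ'U))

/-- For a hereditarily indecomposable continuum `P`, the map `x ↦ c_x`, where `c_x` is
the family of subcontinua of `P` containing `x`, is a bijection from `P` onto the set of
maximal connected chains of closed subsets of `P`; its inverse sends a maximal connected
chain to its smallest element (`x` belongs to every member of `c_x`). -/
theorem hereditarily_indecomposable_chains_bijection
    (P : Type*) [MetricSpace P] [CompactSpace P] [ConnectedSpace P] [Nonempty P]
    (hHI : ∀ K : Set P, IsClosed K → IsConnected K →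
      ∀ A B : Set P, IsClosed A → IsConnected A → IsClosed B → IsConnected B →
        A ∪ B = K → A = K ∨ B = K)
    (MCC : Set (Set (Set P)))
    (hMCC : MCC = {c : Set (Set P) |
      (∀ A ∈ c, IsClosed A ∧ IsConnected A) ∧ IsChain (· ⊆ ·) c ∧
      ∀ K : Set P, IsClosed K → K.Nonempty → (∀ A ∈ c, K ⊆ A ∨ A ⊆ K) → K ∈ c})
    (f : P → Set (Set P))
    (hf : ∀ x : P, f x = {K : Set P | IsClosed K ∧ IsConnected K ∧ x ∈ K}) :
    Set.BijOn f Set.univ MCC ∧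
      ∀ c ∈ MCC, ∀ x : P, f x = c → ∀ A ∈ c, x ∈ A := by
  subst hMCC
  -- any two subcontinua with a common point are comparable
  have hchain : ∀ A B : Set P, IsClosed A → IsConnected A → IsClosed B → IsConnected B →
      (A ∩ B).Nonempty → A ⊆ B ∨ B ⊆ A := by
    intro A B hAc hAconn hBc hBconn hne
    have hK : IsConnected (A ∪ B) := IsConnected.union hne hAconn hBconn
    rcases hHI (A ∪ B) (hAc.union hBc) hK A B hAc hAconn hBc hBconn rfl with h | h
    · right; intro b hb; rw [h]; exact Or.inr hb
    · left; intro a ha; rw [h]; exact Or.inl ha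
  -- maximality : a closed nonempty set comparable with every subcontinuum containing x
  -- is itself a subcontinuum containing x
  have hmax : ∀ x : P, ∀ K : Set P, IsClosed K → K.Nonempty →
      (∀ A : Set P, IsClosed A ∧ IsConnected A ∧ x ∈ A → K ⊆ A ∨ A ⊆ K) →
      IsClosed K ∧ IsConnected K ∧ x ∈ K := by
    intro x K hKc hKne hcomp
    have hxK : x ∈ K := by
      rcases hcomp {x} ⟨isClosed_singleton, isConnected_singleton, rfl⟩ with h | h
      · obtain ⟨k, hk⟩ := hKne
        have hkx : k = x := h hk
        rwa [← hkx]
      · exact h rfl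
    refine ⟨hKc, ⟨⟨x, hxK⟩, ?_⟩, hxK⟩
    rw [isPreconnected_iff_subset_of_fully_disjoint_closed hKc]
    have claim : ∀ u v : Set P, IsClosed u → IsClosed v → K ⊆ u ∪ v → Disjoint u v →
        x ∈ u → K ⊆ u := by
      intro u v hu hv huv hdisj hxu
      rcases eq_empty_or_nonempty (K ∩ v) with hE | hE
      · intro k hk
        rcases huv hk with h | h
        · exact h
        · exfalso
          have hkv : k ∈ K ∩ v := ⟨hk, h⟩
          rw [hE] at hkv
          exact hkv
      · exfalso
        obtain ⟨y, hyK, hyv⟩ := hE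
        set D : Set P := K ∩ u with hD
        set E : Set P := K ∩ v with hEdef
        have hDc : IsClosed D := hKc.inter hu
        have hEc : IsClosed E := hKc.inter hv
        have hDE : Disjoint D E := hdisj.mono inter_subset_right inter_subset_right
        obtain ⟨U, V, hUo, hVo, hDU, hEV, hUV⟩ := NormalSpace.normal D E hDc hEc hDE
        have hxU : x ∈ U := hDU ⟨hxK, hxu⟩
        have hclUE : closure U ∩ E = ∅ := by
          have h1 : closure U ⊆ Vᶜ := closure_minimal hUV.subset_compl_right hVo.isClosed_compl
          rw [eq_empty_iff_forall_notMem]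
          rintro p ⟨hp1, hp2⟩
          exact h1 hp1 (hEV hp2)
        have hUne : U ≠ univ := by
          intro h
          have : y ∈ U := h ▸ mem_univ y
          exact (hUV.ne_of_mem this (hEV ⟨hyK, hyv⟩)) rfl
        have hxcl : x ∈ closure U := subset_closure hxU
        haveI : CompactSpace (closure U) := isCompact_iff_compactSpace.mp
          isClosed_closure.isCompact
        set M : Set P := connectedComponentIn (closure U) x with hM
        have hMconn : IsConnected M := isConnected_connectedComponentIn_iff.mpr hxcl
        have hMcl : IsClosed M := by
          rw [hM, connectedComponentIn_eq_image hxcl]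
          exact (isClosed_connectedComponent.isCompact.image continuous_subtype_val).isClosed
        have hxM : x ∈ M := mem_connectedComponentIn hxcl
        rcases hcomp M ⟨hMcl, hMconn, hxM⟩ with h | h
        · -- K ⊆ M : but y ∈ K, y ∈ E, and M ⊆ closure U which misses E
          have : y ∈ closure U ∩ E := ⟨connectedComponentIn_subset _ _ (h hyK), hyK, hyv⟩
          rw [hclUE] at this
          exact this
        · -- M ⊆ K : then M ⊆ D ⊆ U, contradicting boundary bumping
          obtain ⟨p, hpM, hpcl, hpU⟩ := bump_aux hUo hxU hUne
          have hpK : p ∈ K := h hpM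
          have hpD : p ∈ D := by
            rcases huv hpK with h' | h'
            · exact ⟨hpK, h'⟩
            · exfalso
              have : p ∈ closure U ∩ E := ⟨hpcl, hpK, h'⟩
              rw [hclUE] at this
              exact this
          exact hpU (hDU hpD)
    intro u v hu hv huv hdisj
    rcases huv hxK with hxu | hxv
    · exact Or.inl (claim u v hu hv huv hdisj hxu)
    · exact Or.inr (claim v u hv hu (by rwa [union_comm]) hdisj.symm hxv)
  -- membership in f x is as expected
  have hmemf : ∀ x : P, ∀ A : Set P,
      A ∈ f x ↔ IsClosed A ∧ IsConnected A ∧ x ∈ A := by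
    intro x A; rw [hf]; rfl
  -- f maps into MCC
  have hmaps : ∀ x : P, f x ∈ {c : Set (Set P) |
      (∀ A ∈ c, IsClosed A ∧ IsConnected A) ∧ IsChain (· ⊆ ·) c ∧
      ∀ K : Set P, IsClosed K → K.Nonempty → (∀ A ∈ c, K ⊆ A ∨ A ⊆ K) → K ∈ c} := by
    intro x
    refine ⟨fun A hA => ?_, fun A hA B hB _ => ?_, fun K hKc hKne hcomp => ?_⟩
    · rw [hmemf] at hA; exact ⟨hA.1, hA.2.1⟩
    · rw [hmemf] at hA hB
      exact hchain A B hA.1 hA.2.1 hB.1 hB.2.1 ⟨x, hA.2.2, hB.2.2⟩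
    · rw [hmemf]
      exact hmax x K hKc hKne fun A hA => hcomp A ((hmemf x A).mpr hA)
  constructor
  · refine ⟨fun x _ => hmaps x, fun x _ y _ hxy => ?_, fun c hc => ?_⟩
    · -- injectivity
      have h1 : ({x} : Set P) ∈ f y := by
        rw [← hxy, hmemf]
        exact ⟨isClosed_singleton, isConnected_singleton, rfl⟩
      rw [hmemf] at h1
      exact (h1.2.2 : y ∈ ({x} : Set P)).symm
    · -- surjectivity
      obtain ⟨hc1, hc2, hc3⟩ := hc
      have hPc : (univ : Set P) ∈ c :=
        hc3 univ isClosed_univ univ_nonempty fun A _ => Or.inr (subset_univ A)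
      haveI : Nonempty c := ⟨⟨univ, hPc⟩⟩
      have hdir : Directed (· ⊇ ·) fun A : c => A.val := by
        rintro ⟨A, hA⟩ ⟨B, hB⟩
        rcases eq_or_ne A B with h | h
        · exact ⟨⟨A, hA⟩, Subset.rfl, h ▸ Subset.rfl⟩
        · rcases hc2 hA hB h with h' | h'
          · exact ⟨⟨A, hA⟩, Subset.rfl, h'⟩
          · exact ⟨⟨B, hB⟩, h', Subset.rfl⟩
      obtain ⟨x, hx⟩ := IsCompact.nonempty_iInter_of_directed_nonempty_isCompact_isClosed
        (fun A : c => A.val) hdir (fun A => (hc1 A A.2).2.nonempty)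
        (fun A => (hc1 A A.2).1.isCompact) (fun A => (hc1 A A.2).1)
      have hxall : ∀ A ∈ c, x ∈ A := by
        intro A hA
        exact mem_iInter.mp hx ⟨A, hA⟩
      refine ⟨x, mem_univ x, ?_⟩
      apply Subset.antisymm
      · -- f x ⊆ c
        intro A hA
        rw [hmemf] at hA
        refine hc3 A hA.1 ⟨x, hA.2.2⟩ fun B hB => ?_
        exact hchain A B hA.1 hA.2.1 (hc1 B hB).1 (hc1 B hB).2
            ⟨x, hA.2.2, hxall B hB⟩
      · -- c ⊆ f x
        intro A hA
        rw [hmemf]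
        exact ⟨(hc1 A hA).1, (hc1 A hA).2, hxall A hA⟩
  · intro c _ x hfx A hA
    rw [← hfx, hmemf] at hA
    exact hA.2.2
end
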